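/- arXiv:1911.07089 — 2 statements merged into one kernel-verified Lean document; each statement's English description precedes it below -/
import Mathlib

section
/- Let d be a distance on X. If X is Smyth complete with respect to d (every d-Cauchy net has a Smyth limit), then the formal ball space X₊ = X × [0,∞) with distance d₊((x,r),(y,s)) = (d(x,y) − r + s)₊ is Smyth complete with respect to d₊. -/
open ENNReal NNReal Filter Set

/-- A net `z : ι → Y` is `e`-Cauchy. -/
def CauchyNet {Y : Type} (ι : Type) (instι : Preorder ι) (e : Y → Y → ℝ≥0∞)
    (z : ι → Y) : Prop :=
  letI := instι
  ∀ ε : ℝ≥0∞, 0 < ε → ∃ γ₀, ∀ γ, γ₀ ≤ γ → ∀ δ, γ ≤ δ → e (z γ) (z δ) ≤ ε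

/-- `l` is a Smyth limit of the net `z`: `e w (z γ) → e w l` for all `w`. -/
def SmythLim {Y : Type} (ι : Type) (instι : Preorder ι) (e : Y → Y → ℝ≥0∞)
    (z : ι → Y) (l : Y) : Prop :=
  letI := instι
  ∀ w : Y, Filter.Tendsto (fun γ => e w (z γ)) Filter.atTop (nhds (e w l))

/-- `(Y, e)` is Smyth complete: every `e`-Cauchy net over a nonempty directed index
preorder has a Smyth limit. -/
def SmythComplete {Y : Type} (e : Y → Y → ℝ≥0∞) : Prop :=
  ∀ (ι : Type) (instι : Preorder ι), Nonempty ι →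
    (letI := instι; Directed (· ≤ ·) (id : ι → ι)) →
    ∀ z : ι → Y, CauchyNet ι instι e z → ∃ l, SmythLim ι instι e z l

/-!
Along a `d₊`-Cauchy net of formal balls `(x_γ, r_γ)` one eventually has
`d(x_γ, x_δ) + r_δ ≤ ε + r_γ` for `γ ≤ δ`. Hence the radii are almost antitone, which forces
them to converge to `ρ = limsup r` (and `ρ < ∞`); then `d(x_γ, x_δ) ≤ ε + r_γ - r_δ` is eventually
small, so the centres form a `d`-Cauchy net with a Smyth limit `l`, and `(l, ρ)` is a Smyth
limit of the balls because `d₊(w, (x_γ, r_γ)) = d(w.1, x_γ) + r_γ - w.2`.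
-/

open Topology

section AlmostAntitone

variable {ι : Type} [Preorder ι]

theorem eventually_limsup_le_add {r : ι → ℝ≥0∞}
    (hr : ∀ ε > 0, ∃ γ₀, ∀ γ, γ₀ ≤ γ → ∀ δ, γ ≤ δ → r δ ≤ r γ + ε) {ε : ℝ≥0∞} (hε : 0 < ε) :
    ∀ᶠ γ in atTop, limsup r atTop ≤ r γ + ε := by
  obtain ⟨γ₀, h⟩ := hr ε hε
  filter_upwards [eventually_ge_atTop γ₀] with γ hγ
  exact limsup_le_of_le (by isBoundedDefault)
    ((eventually_ge_atTop γ).mono fun δ hδ => h γ hγ δ hδ)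

variable [Nonempty ι] [IsDirected ι (· ≤ ·)]

theorem tendsto_limsup_of_almost_antitone {r : ι → ℝ≥0∞}
    (hr : ∀ ε > 0, ∃ γ₀, ∀ γ, γ₀ ≤ γ → ∀ δ, γ ≤ δ → r δ ≤ r γ + ε) :
    Tendsto r atTop (𝓝 (limsup r atTop)) := by
  refine tendsto_of_liminf_eq_limsup (le_antisymm liminf_le_limsup ?_) rfl
  refine ENNReal.le_of_forall_pos_le_add fun ε hε _ => ?_
  have hε' : (0 : ℝ≥0∞) < ε := ENNReal.coe_pos.2 hε
  exact tsub_le_iff_right.1 <| le_liminf_of_le (by isBoundedDefault) <|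
    (eventually_limsup_le_add hr hε').mono fun γ hγ => tsub_le_iff_right.2 hγ

theorem exists_tendsto_coe_of_almost_antitone {r : ι → ℝ≥0}
    (hr : ∀ ε > 0, ∃ γ₀, ∀ γ, γ₀ ≤ γ → ∀ δ, γ ≤ δ → (r δ : ℝ≥0∞) ≤ r γ + ε) :
    ∃ ρ : ℝ≥0, Tendsto (fun γ => (r γ : ℝ≥0∞)) atTop (𝓝 ρ) := by
  obtain ⟨γ, hγ⟩ := (eventually_limsup_le_add hr one_pos).exists
  have hfin : limsup (fun γ => (r γ : ℝ≥0∞)) atTop ≠ ⊤ :=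
    ne_top_of_le_ne_top (by simp) hγ
  exact ⟨_, ENNReal.coe_toNNReal hfin ▸ tendsto_limsup_of_almost_antitone hr⟩

end AlmostAntitone

section FormalBall

variable {X : Type}

def formalBallDist (d : X → X → ℝ≥0∞) (p q : X × ℝ≥0) : ℝ≥0∞ :=
  d p.1 q.1 + q.2 - p.2

variable {d : X → X → ℝ≥0∞} {ι : Type} [Preorder ι] {z : ι → X × ℝ≥0}

theorem CauchyNet.formalBallDist_add_le (hz : CauchyNet ι inferInstance (formalBallDist d) z)
    {ε : ℝ≥0∞} (hε : 0 < ε) :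
    ∃ γ₀, ∀ γ, γ₀ ≤ γ → ∀ δ, γ ≤ δ → d (z γ).1 (z δ).1 + (z δ).2 ≤ ε + (z γ).2 := by
  obtain ⟨γ₀, h⟩ := hz ε hε
  exact ⟨γ₀, fun γ hγ δ hδ => tsub_le_iff_right.1 (h γ hγ δ hδ)⟩

theorem CauchyNet.formalBallDist_radius_le (hz : CauchyNet ι inferInstance (formalBallDist d) z)
    {ε : ℝ≥0∞} (hε : 0 < ε) :
    ∃ γ₀, ∀ γ, γ₀ ≤ γ → ∀ δ, γ ≤ δ → ((z δ).2 : ℝ≥0∞) ≤ (z γ).2 + ε := by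
  obtain ⟨γ₀, h⟩ := hz.formalBallDist_add_le hε
  exact ⟨γ₀, fun γ hγ δ hδ => add_comm ε _ ▸ le_add_self.trans (h γ hγ δ hδ)⟩

theorem CauchyNet.fst_of_formalBallDist [Nonempty ι] [IsDirected ι (· ≤ ·)]
    (hz : CauchyNet ι inferInstance (formalBallDist d) z) {ρ : ℝ≥0}
    (hρ : Tendsto (fun γ => ((z γ).2 : ℝ≥0∞)) atTop (𝓝 ρ)) :
    CauchyNet ι inferInstance d (fun γ => (z γ).1) := by
  intro ε hε
  set η := ε / 3
  have hη : 0 < η := ENNReal.div_pos hε.ne' (by norm_num)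
  obtain ⟨γ₀, hγ₀⟩ := hz.formalBallDist_add_le hη
  obtain ⟨γ₁, hγ₁⟩ := eventually_atTop.1 <|
    (eventually_ge_atTop γ₀).and ((ENNReal.tendsto_nhds ENNReal.coe_ne_top).1 hρ η hη)
  refine ⟨γ₁, fun γ hγ δ hδ => ?_⟩
  obtain ⟨hγ₀γ, -, hγρ⟩ := hγ₁ γ hγ
  have hρδ : (ρ : ℝ≥0∞) ≤ (z δ).2 + η := tsub_le_iff_right.1 (hγ₁ δ (hγ.trans hδ)).2.1
  refine (ENNReal.add_le_add_iff_right (ENNReal.coe_ne_top (r := (z δ).2))).1 ?_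
  calc d (z γ).1 (z δ).1 + (z δ).2 ≤ η + (z γ).2 := hγ₀ γ hγ₀γ δ hδ
    _ ≤ η + (ρ + η) := by gcongr
    _ ≤ η + ((z δ).2 + η + η) := by gcongr
    _ = 3 * η + (z δ).2 := by ring
    _ = ε + (z δ).2 := by rw [ENNReal.mul_div_cancel (by norm_num) (by norm_num)]

theorem SmythLim.formalBallDist {l : X} {ρ : ℝ≥0}
    (hl : SmythLim ι inferInstance d (fun γ => (z γ).1) l)
    (hρ : Tendsto (fun γ => ((z γ).2 : ℝ≥0∞)) atTop (𝓝 ρ)) :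
    SmythLim ι inferInstance (formalBallDist d) z (l, ρ) := fun w =>
  ENNReal.Tendsto.sub ((hl w.1).add hρ) tendsto_const_nhds (Or.inr ENNReal.coe_ne_top)

theorem smythComplete_formalBallDist (hcomp : SmythComplete d) :
    SmythComplete (formalBallDist d) := by
  intro ι instι hne hdir z hz
  let := instι
  have : IsDirected ι (· ≤ ·) := ⟨fun a b => by simpa using hdir a b⟩
  obtain ⟨ρ, hρ⟩ :=
    exists_tendsto_coe_of_almost_antitone fun _ hε => hz.formalBallDist_radius_le hε
  obtain ⟨l, hl⟩ := hcomp ι instι hne hdir _ (hz.fst_of_formalBallDist hρ)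
  exact ⟨(l, ρ), hl.formalBallDist hρ⟩

end FormalBall

theorem formalBall_smythComplete_general {X : Type} (d : X → X → ℝ≥0∞)
    (hcomp : SmythComplete d) :
    SmythComplete (fun p q : X × ℝ≥0 => (d p.1 q.1 + (q.2 : ℝ≥0∞)) - (p.2 : ℝ≥0∞)) :=
  smythComplete_formalBallDist hcomp

/-- If `(X, d)` is Smyth complete, so is the formal ball space
`X₊ = X × [0,∞)` with `d₊((x,r),(y,s)) = (d x y − r + s)₊`. -/
theorem formalBall_smythComplete {X : Type} (d : X → X → ℝ≥0∞)
    (htri : ∀ x y z, d x z ≤ d x y + d y z)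
    (hcomp : SmythComplete d) :
    SmythComplete (fun p q : X × ℝ≥0 => (d p.1 q.1 + (q.2 : ℝ≥0∞)) - (p.2 : ℝ≥0∞)) :=
  formalBall_smythComplete_general d hcomp
end

section
/- Let d be a hemimetric on X such that X is d-Noetherian (every d-Cauchy sequence is dᵒᵖ-Cauchy). If X is Smyth complete (every d-Cauchy net has a Smyth limit), then every d-Cauchy sequence (x_n) converges symmetrically: there is x ∈ X with lim_n max(d(x,x_n), d(x_n,x)) = 0. -/
open ENNReal NNReal Filter Set

/-- If `d` is a hemimetric, `X` is `d`-Noetherian (every `d`-Cauchy sequence is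
`dᵒᵖ`-Cauchy), and `X` is Smyth complete, then every `d`-Cauchy sequence converges
symmetrically: there is `l` with `max (d l (x n)) (d (x n) l) → 0`. -/
theorem noetherian_smyth_symmetric_convergence {X : Type} (d : X → X → ℝ≥0∞)
    (href : ∀ x, d x x = 0) (htri : ∀ x y z, d x z ≤ d x y + d y z)
    (hNoeth : ∀ x : ℕ → X, CauchyNet ℕ inferInstance d x →
      CauchyNet ℕ inferInstance (fun a b => d b a) x)
    (hcomp : SmythComplete d)
    (x : ℕ → X) (hx : CauchyNet ℕ inferInstance d x) :
    ∃ l : X, Filter.Tendsto (fun n => max (d l (x n)) (d (x n) l))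
      Filter.atTop (nhds 0) := by
  obtain ⟨l, hl⟩ := hcomp ℕ inferInstance ⟨0⟩
    (fun a b => ⟨max a b, le_max_left a b, le_max_right a b⟩) x hx
  refine ⟨l, ?_⟩
  have h1 : Filter.Tendsto (fun n => d l (x n)) Filter.atTop (nhds 0) := by
    have := hl l
    rwa [href l] at this
  have h2 : Filter.Tendsto (fun n => d (x n) l) Filter.atTop (nhds 0) := by
    rw [ENNReal.tendsto_atTop_zero]
    intro ε hε
    obtain ⟨γ₀, hγ₀⟩ := hx ε hε
    refine ⟨γ₀, fun n hn => ?_⟩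
    refine le_of_tendsto (hl (x n)) ?_
    filter_upwards [Filter.eventually_ge_atTop n] with δ hδ
    exact hγ₀ n hn δ hδ
  have := h1.max h2
  simpa using this
end
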